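/- arXiv:2602.01755 — 4 statements merged into one kernel-verified Lean document; each statement's English description precedes it below -/
import Mathlib

section
/- Let G be a graph on n nodes, k with ⌊(n-1)/2⌋ ≤ k ≤ n-2, and let L : {0,...,n-k-2} ↪ V(G) and R : {k+1,...,n-1} ↪ V(G) be injections with disjoint images such that {L(i), R(k+j+1)} ∉ E(G) for all 0 ≤ i ≤ j < n-k-1. Then any layout π of G with π⁻¹ agreeing with L on {0,...,n-k-2} and with R on {k+1,...,n-1} satisfies β_π(G) ≤ k. -/
theorem stmt8 {V : Type} [Fintype V] {n k : ℕ} (hcard : Fintype.card V = n)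
    (G : SimpleGraph V) (hk1 : (n - 1) / 2 ≤ k) (hk2 : k ≤ n - 2)
    (L R : Fin (n - k - 1) ↪ V)
    (hdisj : Set.range L ∩ Set.range R = ∅)
    (hfeas : ∀ i j : Fin (n - k - 1), i ≤ j → ¬ G.Adj (L i) (R j))
    (π : V ≃ Fin n)
    (hL : ∀ i : Fin (n - k - 1), π.symm ⟨(i : ℕ), by have := i.isLt; omega⟩ = L i)
    (hR : ∀ j : Fin (n - k - 1), π.symm ⟨k + (j : ℕ) + 1, by have := j.isLt; omega⟩ = R j) :
    ∀ u v : V, G.Adj u v → |((π u : ℕ) : ℤ) - ((π v : ℕ) : ℤ)| ≤ (k : ℤ) := by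
  have key : ∀ u v : V, G.Adj u v → (π u : ℕ) + k < (π v : ℕ) → False := by
    intro u v huv hlt
    have hun := (π u).isLt
    have hvn := (π v).isLt
    have ha : (π u : ℕ) < n - k - 1 := by omega
    have hb : (π v : ℕ) - k - 1 < n - k - 1 := by omega
    set i : Fin (n - k - 1) := ⟨(π u : ℕ), ha⟩
    set j : Fin (n - k - 1) := ⟨(π v : ℕ) - k - 1, hb⟩
    have hu : u = L i := by
      have h1 := hL i
      have h2 : (⟨(i : ℕ), by have := i.isLt; omega⟩ : Fin n) = π u := by
        apply Fin.ext; rfl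
      rw [h2, Equiv.symm_apply_apply] at h1
      exact h1
    have hv : v = R j := by
      have h1 := hR j
      have h2 : (⟨k + (j : ℕ) + 1, by have := j.isLt; omega⟩ : Fin n) = π v := by
        apply Fin.ext; show k + ((π v : ℕ) - k - 1) + 1 = (π v : ℕ); omega
      rw [h2, Equiv.symm_apply_apply] at h1
      exact h1
    exact hfeas i j (by show (π u : ℕ) ≤ (π v : ℕ) - k - 1; omega) (hu ▸ hv ▸ huv)
  intro u v huv
  have h1 : ¬ ((π u : ℕ) + k < (π v : ℕ)) := fun h => key u v huv h
  have h2 : ¬ ((π v : ℕ) + k < (π u : ℕ)) := fun h => key v u huv.symm h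
  rw [abs_sub_le_iff]
  constructor <;> [skip; skip] <;> push_cast <;> omega
end

section
/- Let G be a graph on n nodes, k with ⌊(n-1)/2⌋ ≤ k ≤ n-2. Suppose that for every injection L : {0,...,n-k-2} ↪ V(G), there exists some j with 0 ≤ j < n-k-1 such that |{v ∈ V(G) \ im(L) : {L(i), v} ∉ E(G) for all i ≤ j}| < n-k-j-1. Then β(G) > k. -/
/-- The set `A_j` of unplaced nodes not adjacent to any of `L 0, …, L j`. -/
def Aset {V : Type} {m : ℕ} (G : SimpleGraph V) (L : Fin m ↪ V) (j : Fin m) : Set V :=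
  {v : V | v ∉ Set.range L ∧ ∀ i : Fin m, i ≤ j → ¬ G.Adj (L i) v}

theorem stmt13 {V : Type} [Fintype V] {n k : ℕ} (hcard : Fintype.card V = n)
    (G : SimpleGraph V) (hk1 : (n - 1) / 2 ≤ k) (hk2 : k ≤ n - 2)
    (hHall : ∀ L : Fin (n - k - 1) ↪ V,
      ∃ j : Fin (n - k - 1), (Aset G L j).ncard < n - k - 1 - (j : ℕ)) :
    ∀ π : V ≃ Fin n, ∃ u v : V, G.Adj u v ∧
      (k : ℤ) < |((π u : ℕ) : ℤ) - ((π v : ℕ) : ℤ)| := by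
  intro π
  by_contra hcon
  push_neg at hcon
  -- n ≥ 2 (since k ≤ n - 2 and ... ); key arithmetic fact:
  have hn2k : n ≤ 2 * k + 2 := by omega
  have hmn : n - k - 1 ≤ n := by omega
  set m := n - k - 1 with hm
  let L : Fin m ↪ V := (Fin.castLEEmb hmn).trans π.symm.toEmbedding
  have hLval : ∀ i : Fin m, ((π (L i) : ℕ)) = (i : ℕ) := by
    intro i
    simp [L, Fin.castLEEmb]
  obtain ⟨j, hj⟩ := hHall L
  have hjm : (j : ℕ) < m := j.isLt
  -- injection from Fin (m - j) into Aset G L j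
  have hbound : ∀ i : Fin (m - j), k + 1 + j + i < n := by
    intro i
    have := i.isLt
    omega
  let f : Fin (m - (j : ℕ)) → V := fun i => π.symm ⟨k + 1 + j + i, hbound i⟩
  have hfval : ∀ i, ((π (f i) : ℕ)) = k + 1 + (j : ℕ) + (i : ℕ) := by
    intro i; simp [f]
  have hmem : ∀ i, f i ∈ Aset G L j := by
    intro i
    constructor
    · rintro ⟨i', hi'⟩
      have h1 : ((π (f i) : ℕ)) = (i' : ℕ) := by rw [← hi', hLval]
      rw [hfval] at h1
      have := i'.isLt
      omega
    · intro i' hle hadj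
      have h1 := hcon _ _ hadj
      rw [abs_le] at h1
      have h2 := hLval i'
      have h3 := hfval i
      have hle' : (i' : ℕ) ≤ (j : ℕ) := hle
      omega
  have hfinj : Function.Injective
      (fun i : Fin (m - (j : ℕ)) => (⟨f i, hmem i⟩ : Aset G L j)) := by
    intro a b hab
    have : f a = f b := congrArg Subtype.val hab
    have h1 : ((π (f a) : ℕ)) = ((π (f b) : ℕ)) := by rw [this]
    rw [hfval, hfval] at h1
    exact Fin.ext (by omega)
  have hcard2 : m - (j : ℕ) ≤ (Aset G L j).ncard := by
    have := Nat.card_le_card_of_injective _ hfinj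
    simpa [Nat.card_coe_set_eq] using this
  omega
end

section
/- Let G be a graph on n nodes, k with ⌊(n-1)/2⌋ ≤ k ≤ n-2. Then β(G) ≤ k if and only if there exists an injection L : {0,...,n-k-2} ↪ V(G) such that for all j with 0 ≤ j < n-k-1, the set A_j = {v ∈ V(G) \ im(L) : {L(i), v} ∉ E(G) for all i ≤ j} satisfies |A_j| ≥ n-k-j-1. -/
/-!
Put `m = n - k - 1`. Since `n ≤ 2k + 2`, the first `m` positions of a layout are at distance at
most `k` from each other, and so are the last `n - m ≤ k + 1` positions; the only constraints are
between a vertex `L i` at position `i < m` and a vertex at position `m + q`, which must be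
non-adjacent when `i + k < m + q`. Given a bandwidth-`k` layout, its first `m` vertices form `L`,
and the vertices at positions `j + k + 1, …, n - 1` witness `|A_j| ≥ m - j`. Conversely, the
vertices allowed at position `m + q` contain `A_{m + q - k - 1}` (all unplaced vertices if
`m + q ≤ k`), so there are at least `n - m - q` of them, and Hall's theorem fills the last `n - m`
positions.
-/

open Finset in
theorem Fin.exists_injective_forall_mem_of_sub_le_card {α : Type*} [DecidableEq α] {r : ℕ}
    (t : Fin r → Finset α) (ht : ∀ q : Fin r, r - q ≤ #(t q)) :
    ∃ f : Fin r → α, Function.Injective f ∧ ∀ q, f q ∈ t q := by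
  refine (all_card_le_biUnion_card_iff_exists_injective t).mp fun s => ?_
  rcases s.eq_empty_or_nonempty with rfl | hs
  · simp
  calc #s ≤ #(Ici (s.min' hs)) := card_le_card fun q hq => mem_Ici.mpr (s.min'_le q hq)
    _ = r - s.min' hs := Fin.card_Ici _
    _ ≤ #(t (s.min' hs)) := ht _
    _ ≤ #(s.biUnion t) := card_le_card (subset_biUnion_of_mem t (s.min'_mem hs))

section Layout

variable {V : Type} (G : SimpleGraph V)

theorem exists_embedding_ncard_aset_of_bandwidth_le {n k : ℕ} (π : V ≃ Fin n)
    (hπ : ∀ u v : V, G.Adj u v → |((π u : ℕ) : ℤ) - ((π v : ℕ) : ℤ)| ≤ (k : ℤ))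
    (hm : n - k - 1 ≤ k + 1) :
    ∃ L : Fin (n - k - 1) ↪ V, ∀ j : Fin (n - k - 1), n - k - 1 - (j : ℕ) ≤ (Aset G L j).ncard := by
  have : Finite V := .of_equiv _ π.symm
  let L : Fin (n - k - 1) ↪ V := (Fin.castLEEmb (by omega)).trans π.symm.toEmbedding
  have hL : ∀ i, (π (L i) : ℕ) = i := by simp [L]
  refine ⟨L, fun j => ?_⟩
  let F : Fin (n - k - 1 - j) → V := fun t => π.symm ⟨j + k + 1 + t, by omega⟩
  have hF : ∀ t, (π (F t) : ℕ) = j + k + 1 + t := by simp [F]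
  have hF_inj : Function.Injective F := fun s t h => by
    have := congrArg (fun v => (π v : ℕ)) h
    simp only [hF] at this
    omega
  have hF_aset : Set.range F ⊆ Aset G L j := by
    rintro _ ⟨t, rfl⟩
    refine ⟨?_, fun i hij hadj => ?_⟩
    · rintro ⟨i, hi⟩
      have := congrArg (fun v => (π v : ℕ)) hi
      simp only [hL, hF] at this
      omega
    · have := hπ _ _ hadj
      rw [hL, hF, abs_sub_le_iff] at this
      have : (i : ℕ) ≤ j := hij
      omega
  calc n - k - 1 - j = (Set.range F).ncard := by
        rw [Set.ncard_range_of_injective hF_inj, Nat.card_fin]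
    _ ≤ (Aset G L j).ncard := Set.ncard_le_ncard hF_aset

variable [Fintype V] {m r k : ℕ}

theorem exists_injective_compl_range_not_adj (hcard : Fintype.card V = m + r) (hr : r ≤ k + 1)
    (L : Fin m ↪ V) (hL : ∀ j : Fin m, m - j ≤ (Aset G L j).ncard) :
    ∃ f : Fin r → V, Function.Injective f ∧ ∀ q : Fin r,
      f q ∉ Set.range L ∧ ∀ i : Fin m, (i : ℕ) + k < m + q → ¬ G.Adj (L i) (f q) := by
  classical
  let S : Fin r → Set V := fun q =>
    {v | v ∉ Set.range L ∧ ∀ i : Fin m, (i : ℕ) + k < m + q → ¬ G.Adj (L i) v}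
  have hS : ∀ q, r - q ≤ (S q).ncard := by
    intro q
    by_cases hq : m + q ≤ k
    · have hcompl : (Set.range L)ᶜ ⊆ S q := fun v hv => ⟨hv, fun i hi => by omega⟩
      have hrange := Set.ncard_add_ncard_compl (Set.range L)
      rw [Set.ncard_range_of_injective L.injective, Nat.card_fin, Nat.card_eq_fintype_card,
        hcard] at hrange
      calc r - q ≤ (Set.range L)ᶜ.ncard := by omega
        _ ≤ (S q).ncard := Set.ncard_le_ncard hcompl
    · let j : Fin m := ⟨m + q - k - 1, by omega⟩
      have haset : Aset G L j ⊆ S q := fun v hv =>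
        ⟨hv.1, fun i hi => hv.2 i (show (i : ℕ) ≤ m + q - k - 1 by omega)⟩
      calc r - q ≤ m - j := by simp only [j]; omega
        _ ≤ (Aset G L j).ncard := hL j
        _ ≤ (S q).ncard := Set.ncard_le_ncard haset
  obtain ⟨f, hf, hfS⟩ := Fin.exists_injective_forall_mem_of_sub_le_card (fun q => (S q).toFinset)
    (by simpa only [Set.ncard_eq_toFinset_card'] using hS)
  exact ⟨f, hf, fun q => by simpa [S] using hfS q⟩

theorem exists_bandwidth_le_of_ncard_aset {n : ℕ} (hcard : Fintype.card V = n) (hmr : m + r = n)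
    (hm : m ≤ k + 1) (hr : r ≤ k + 1) (L : Fin m ↪ V)
    (hL : ∀ j : Fin m, m - j ≤ (Aset G L j).ncard) :
    ∃ π : V ≃ Fin n, ∀ u v : V, G.Adj u v →
      |((π u : ℕ) : ℤ) - ((π v : ℕ) : ℤ)| ≤ (k : ℤ) := by
  obtain ⟨f, hf, hfLG⟩ :=
    exists_injective_compl_range_not_adj G (hcard.trans hmr.symm) hr L hL
  have hσ : Function.Bijective (Sum.elim L f) := by
    refine (Fintype.bijective_iff_injective_and_card _).mpr ⟨?_, by simp [hcard, hmr]⟩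
    exact L.injective.sumElim hf fun i q h => (hfLG q).1 ⟨i, h⟩
  let σ := Equiv.ofBijective _ hσ
  let π : V ≃ Fin n := σ.symm.trans (finSumFinEquiv.trans (finCongr hmr))
  have hpos : ∀ x, (π (σ x) : ℕ) =
      Sum.elim (fun i : Fin m => (i : ℕ)) (fun q : Fin r => m + (q : ℕ)) x := by
    rintro (i | q) <;> simp [π]
  have key : ∀ x y, G.Adj (σ x) (σ y) → (π (σ x) : ℕ) ≤ π (σ y) + k := by
    rintro (i | q) (i' | q') hadj <;> simp only [hpos, Sum.elim_inl, Sum.elim_inr]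
    · omega
    · omega
    · by_contra h
      exact (hfLG q).2 i' (by omega) hadj.symm
    · omega
  refine ⟨π, fun u v huv => ?_⟩
  obtain ⟨x, rfl⟩ := σ.surjective u
  obtain ⟨y, rfl⟩ := σ.surjective v
  have := key x y huv
  have := key y x huv.symm
  rw [abs_sub_le_iff]
  omega

end Layout

theorem stmt14_general {V : Type} [Fintype V] {n k : ℕ} (hcard : Fintype.card V = n)
    (G : SimpleGraph V) (hk1 : (n - 1) / 2 ≤ k) :
    (∃ π : V ≃ Fin n, ∀ u v : V, G.Adj u v →
        |((π u : ℕ) : ℤ) - ((π v : ℕ) : ℤ)| ≤ (k : ℤ)) ↔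
      ∃ L : Fin (n - k - 1) ↪ V,
        ∀ j : Fin (n - k - 1), n - k - 1 - (j : ℕ) ≤ (Aset G L j).ncard := by
  have hm : n - k - 1 ≤ k + 1 := by omega
  constructor
  · rintro ⟨π, hπ⟩
    exact exists_embedding_ncard_aset_of_bandwidth_le G π hπ hm
  · rintro ⟨L, hL⟩
    exact exists_bandwidth_le_of_ncard_aset G hcard (r := n - (n - k - 1)) (by omega) hm (by omega) L hL

theorem stmt14 {V : Type} [Fintype V] {n k : ℕ} (hcard : Fintype.card V = n)
    (G : SimpleGraph V) (hk1 : (n - 1) / 2 ≤ k) (hk2 : k ≤ n - 2) :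
    (∃ π : V ≃ Fin n, ∀ u v : V, G.Adj u v →
        |((π u : ℕ) : ℤ) - ((π v : ℕ) : ℤ)| ≤ (k : ℤ)) ↔
      ∃ L : Fin (n - k - 1) ↪ V,
        ∀ j : Fin (n - k - 1), n - k - 1 - (j : ℕ) ≤ (Aset G L j).ncard :=
  stmt14_general hcard G hk1
end

section
/- Let G be a graph on n nodes and suppose β(G) ≤ k with ⌊(n-1)/2⌋ ≤ k ≤ n-2. Then there exist injections L : {0,...,n-k-2} ↪ V(G) and R : {k+1,...,n-1} ↪ V(G) with disjoint images such that {L(i), R(k+j+1)} ∉ E(G) whenever 0 ≤ i ≤ j < n-k-1. -/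
/-!
Take `L` and `R` to be the vertices placed at the leftmost positions `0, …, n-k-2` and at the
rightmost positions `k+1, …, n-1` of a layout of bandwidth `k`. Since `n - k - 1 ≤ k + 1` the two
blocks of positions do not overlap, and for `i ≤ j` the positions `i` and `k + 1 + j` are more
than `k` apart, so `L i` and `R j` cannot be adjacent.
-/

def Fin.natAddSubEmb (d n : ℕ) : Fin (n - d) ↪ Fin n where
  toFun j := ⟨d + j, by omega⟩
  inj' i j h := Fin.ext (by simpa using congrArg Fin.val h)

@[simp]
theorem Fin.val_natAddSubEmb (d n : ℕ) (j : Fin (n - d)) :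
    (Fin.natAddSubEmb d n j : ℕ) = d + j :=
  rfl

namespace SimpleGraph

variable {V : Type} {n k : ℕ}

def IsBandwidthLayout (G : SimpleGraph V) (π : V ≃ Fin n) (k : ℕ) : Prop :=
  ∀ u v : V, G.Adj u v → |((π u : ℕ) : ℤ) - ((π v : ℕ) : ℤ)| ≤ (k : ℤ)

theorem IsBandwidthLayout.not_adj_symm_of_add_lt {G : SimpleGraph V} {π : V ≃ Fin n}
    (hπ : G.IsBandwidthLayout π k) {a b : Fin n} (hab : (a : ℕ) + k < b) :
    ¬ G.Adj (π.symm a) (π.symm b) := by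
  intro hadj
  have hdist := abs_le.mp (hπ _ _ hadj)
  simp only [Equiv.apply_symm_apply] at hdist
  omega

end SimpleGraph

theorem stmt19_general {V : Type} {n k : ℕ}
    (G : SimpleGraph V) (hk1 : (n - 1) / 2 ≤ k)
    (hβ : ∃ π : V ≃ Fin n, ∀ u v : V, G.Adj u v →
      |((π u : ℕ) : ℤ) - ((π v : ℕ) : ℤ)| ≤ (k : ℤ)) :
    ∃ L R : Fin (n - k - 1) ↪ V, Set.range L ∩ Set.range R = ∅ ∧
      ∀ i j : Fin (n - k - 1), i ≤ j → ¬ G.Adj (L i) (R j) := by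
  obtain ⟨π, hπ⟩ := hβ
  have hblocks : n - k - 1 ≤ k + 1 := by omega
  refine ⟨(Fin.castLEEmb (Nat.sub_le n (k + 1))).trans π.symm.toEmbedding,
    (Fin.natAddSubEmb (k + 1) n).trans π.symm.toEmbedding, ?_, ?_⟩
  · rw [← Set.disjoint_iff_inter_eq_empty, Set.disjoint_range_iff]
    intro i j hij
    have hpos := congrArg Fin.val (π.symm.injective hij)
    simp only [Fin.castLEEmb_apply, Fin.val_castLE, Fin.val_natAddSubEmb] at hpos
    omega
  · intro i j hij
    refine SimpleGraph.IsBandwidthLayout.not_adj_symm_of_add_lt hπ ?_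
    simp only [Fin.castLEEmb_apply, Fin.val_castLE, Fin.val_natAddSubEmb]
    have hij' : (i : ℕ) ≤ j := hij
    omega

theorem stmt19 {V : Type} [Fintype V] {n k : ℕ} (hcard : Fintype.card V = n)
    (G : SimpleGraph V) (hk1 : (n - 1) / 2 ≤ k) (hk2 : k ≤ n - 2)
    (hβ : ∃ π : V ≃ Fin n, ∀ u v : V, G.Adj u v →
      |((π u : ℕ) : ℤ) - ((π v : ℕ) : ℤ)| ≤ (k : ℤ)) :
    ∃ L R : Fin (n - k - 1) ↪ V, Set.range L ∩ Set.range R = ∅ ∧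
      ∀ i j : Fin (n - k - 1), i ≤ j → ¬ G.Adj (L i) (R j) :=
  stmt19_general G hk1 hβ
end
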